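/- Let (ν_i, k_i) be a sequence with ν_i ≥ 0 and k_i ∈ ℕ such that j_{ν_i, k_i} → ∞ as i → ∞. Then j_{ν_i, k_i + 1} / j_{ν_i, k_i} → 1 as i → ∞. -/

import Mathlib

open Filter

/-- The Bessel function of the first kind of (real) order `ν`,
`J_ν(z) = Σ_{k≥0} (-1)^k (z/2)^{2k+ν} / (k! Γ(k+ν+1))`. -/
noncomputable def besselJ (ν : ℝ) (z : ℝ) : ℝ :=
  ∑' k : ℕ, ((-1 : ℝ) ^ k / (Nat.factorial k * Real.Gamma (k + ν + 1))) *
    (z / 2) ^ (2 * (k : ℝ) + ν)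

/-- `besselJZero ν k` is the `k`-th positive zero `j_{ν,k}` of `J_ν` (for `k ≥ 1`;
the value at `k = 0` is a sentinel equal to `0`). -/
noncomputable def besselJZero (ν : ℝ) : ℕ → ℝ
  | 0 => 0
  | k + 1 => sInf {z : ℝ | besselJZero ν k < z ∧ besselJ ν z = 0}

/-! `u(x) = √x J_ν(x)` solves `u'' + (1 - (ν² - 1/4)/x²) u = 0`. A positive zero `j` of `J_ν` has
`j² ≥ ν² - 1/4`, so on `[(1 + ε) j, ∞)` the coefficient is at least `m² = 1 - (1 + ε)⁻²`, and
Sturm comparison with `sin (m x)` puts a zero of `u` in every interval of length `π / m` there.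
Hence `j_{ν,k} ≤ j_{ν,k+1} ≤ (1 + ε) j_{ν,k} + π / m` uniformly in `ν`, and the ratio tends to `1`
as `j_{ν,k} → ∞`. -/

open Set Real Topology
open scoped Nat

noncomputable section

section PowerSeries

variable {c : ℕ → ℝ} {A : ℝ}

def derivCoeff (c : ℕ → ℝ) (k : ℕ) : ℝ := (k + 1) * c (k + 1)

def powSeries (c : ℕ → ℝ) (y : ℝ) : ℝ := ∑' k, c k * y ^ k

lemma powSeries_zero (c : ℕ → ℝ) : powSeries c 0 = c 0 := by
  rw [powSeries, tsum_eq_single 0 fun k hk => by simp [hk]]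
  simp

lemma summable_mul_pow_of_abs_le (hc : ∀ k, |c k| ≤ A / k !) (y : ℝ) :
    Summable fun k => c k * y ^ k :=
  .of_norm_bounded ((Real.summable_pow_div_factorial |y|).mul_left A) fun k => by
    rw [norm_mul, norm_pow, Real.norm_eq_abs, Real.norm_eq_abs]
    calc |c k| * |y| ^ k ≤ A / k ! * |y| ^ k := by gcongr; exact hc k
      _ = A * (|y| ^ k / k !) := by ring

lemma abs_derivCoeff_le (hc : ∀ k, |c k| ≤ A / k !) (k : ℕ) : |derivCoeff c k| ≤ A / k ! := by
  calc |derivCoeff c k| = (k + 1) * |c (k + 1)| := by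
        rw [derivCoeff, abs_mul, abs_of_pos (by positivity)]
    _ ≤ (k + 1) * (A / (k + 1)!) := by gcongr; exact hc _
    _ = A / k ! := by rw [Nat.factorial_succ]; push_cast; field_simp

lemma hasDerivAt_powSeries (hc : ∀ k, |c k| ≤ A / k !) (y : ℝ) :
    HasDerivAt (powSeries c) (powSeries (derivCoeff c) y) y := by
  set R := |y| + 1
  have hshift : powSeries c = fun z => c 0 + ∑' k, c (k + 1) * z ^ (k + 1) := by
    funext z
    rw [powSeries]
    simpa using (summable_mul_pow_of_abs_le hc z).tsum_eq_zero_add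
  have hy : y ∈ Metric.ball (0 : ℝ) R := by simp [R]
  rw [hshift]
  refine .const_add _ (hasDerivAt_tsum_of_isPreconnected (g := fun k z => c (k + 1) * z ^ (k + 1))
    (g' := fun k z => derivCoeff c k * z ^ k)
    ((Real.summable_pow_div_factorial R).mul_left A) Metric.isOpen_ball
    (convex_ball 0 R).isPreconnected (fun k z _ => ?_) (fun k z hz => ?_) hy
    ((summable_nat_add_iff 1).2 (summable_mul_pow_of_abs_le hc y)) hy)
  · simpa [derivCoeff, mul_comm, mul_left_comm, mul_assoc] using
      (hasDerivAt_pow (k + 1) z).const_mul (c (k + 1))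
  · have hzR : |z| ≤ R := by simpa using (Metric.mem_ball.1 hz).le
    rw [norm_mul, norm_pow, Real.norm_eq_abs, Real.norm_eq_abs]
    calc |derivCoeff c k| * |z| ^ k ≤ A / k ! * R ^ k := by
          have hck := abs_derivCoeff_le hc k
          exact mul_le_mul hck (pow_le_pow_left₀ (abs_nonneg z) hzR k) (by positivity)
            ((abs_nonneg _).trans hck)
      _ = A * (R ^ k / k !) := by ring

lemma continuous_powSeries (hc : ∀ k, |c k| ≤ A / k !) : Continuous (powSeries c) :=
  continuous_iff_continuousAt.2 fun y => (hasDerivAt_powSeries hc y).continuousAt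

lemma hasDerivAt_powSeries_sq (hc : ∀ k, |c k| ≤ A / k !) (x : ℝ) :
    HasDerivAt (fun x => powSeries c (x ^ 2)) (powSeries (derivCoeff c) (x ^ 2) * (2 * x)) x :=
  (hasDerivAt_powSeries hc (x ^ 2)).comp (h := fun x : ℝ => x ^ 2) x
    (by simpa using hasDerivAt_pow 2 x)

end PowerSeries

section BesselSeries

variable {ν : ℝ}

def besselCoeff (ν : ℝ) (k : ℕ) : ℝ := (-1) ^ k / (k ! * Gamma (k + ν + 1) * 4 ^ k)

lemma Gamma_add_one_le_Gamma_nat_add (hν : 0 ≤ ν) (k : ℕ) :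
    Gamma (ν + 1) ≤ Gamma (k + ν + 1) := by
  induction k with
  | zero => simp
  | succ n ih =>
    have hn : 1 ≤ (n : ℝ) + ν + 1 := by linarith [n.cast_nonneg (α := ℝ)]
    rw [show ((n + 1 : ℕ) : ℝ) + ν + 1 = (n + ν + 1) + 1 by push_cast; ring,
      Gamma_add_one (s := n + ν + 1) (by positivity)]
    exact ih.trans (le_mul_of_one_le_left (Gamma_pos_of_pos (by positivity)).le hn)

lemma abs_besselCoeff_le (hν : 0 ≤ ν) (k : ℕ) :
    |besselCoeff ν k| ≤ (Gamma (ν + 1))⁻¹ / k ! := by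
  have hΓ : 0 < Gamma (ν + 1) := Gamma_pos_of_pos (by positivity)
  have hΓk : Gamma (ν + 1) ≤ Gamma (k + ν + 1) * 4 ^ k :=
    (Gamma_add_one_le_Gamma_nat_add hν k).trans
      (le_mul_of_one_le_right (hΓ.trans_le (Gamma_add_one_le_Gamma_nat_add hν k)).le
        (one_le_pow₀ (by norm_num)))
  calc |besselCoeff ν k| = 1 / (k ! * (Gamma (k + ν + 1) * 4 ^ k)) := by
        rw [besselCoeff, abs_div, abs_pow, abs_neg, abs_one, one_pow, mul_assoc,
          abs_of_pos (by positivity)]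
    _ ≤ 1 / (k ! * Gamma (ν + 1)) := by gcongr
    _ = (Gamma (ν + 1))⁻¹ / k ! := by field_simp

lemma besselCoeff_add_mul_besselCoeff_succ (hν : 0 ≤ ν) (k : ℕ) :
    besselCoeff ν k + 4 * (k + 1) * (k + ν + 1) * besselCoeff ν (k + 1) = 0 := by
  have hΓ : 0 < Gamma (k + ν + 1) := Gamma_pos_of_pos (by positivity)
  rw [besselCoeff, besselCoeff, Nat.factorial_succ, pow_succ, pow_succ,
    show ((k + 1 : ℕ) : ℝ) + ν + 1 = (k + ν + 1) + 1 by push_cast; ring,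
    Gamma_add_one (s := k + ν + 1) (by positivity)]
  push_cast
  field_simp
  ring

lemma powSeries_besselCoeff_ode (hν : 0 ≤ ν) (y : ℝ) :
    powSeries (besselCoeff ν) y + 4 * (ν + 1) * powSeries (derivCoeff (besselCoeff ν)) y
      + 4 * y * powSeries (derivCoeff (derivCoeff (besselCoeff ν))) y = 0 := by
  set c := besselCoeff ν
  have hc := abs_besselCoeff_le hν
  set a : ℕ → ℝ := fun k => 4 * k * (k + 1) * c (k + 1) * y ^ k
  have hlow : ∀ k, c k * y ^ k + 4 * (ν + 1) * (derivCoeff c k * y ^ k) = -a k := by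
    intro k
    simp only [a, derivCoeff]
    linear_combination y ^ k * besselCoeff_add_mul_besselCoeff_succ hν k
  have hhigh : ∀ k, 4 * y * (derivCoeff (derivCoeff c) k * y ^ k) = a (k + 1) := by
    intro k
    simp only [a, derivCoeff]
    push_cast
    ring
  have hs0 := summable_mul_pow_of_abs_le hc y
  have hs1 := (summable_mul_pow_of_abs_le (abs_derivCoeff_le hc) y).mul_left (4 * (ν + 1))
  have ha : Summable a := by simpa using ((hs0.add hs1).congr hlow).neg
  have h1 : powSeries c y + 4 * (ν + 1) * powSeries (derivCoeff c) y = -∑' k, a k := by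
    rw [powSeries, powSeries, ← tsum_mul_left, ← hs0.tsum_add hs1, tsum_congr hlow, tsum_neg]
  have h2 : 4 * y * powSeries (derivCoeff (derivCoeff c)) y = ∑' k, a k := by
    rw [powSeries, ← tsum_mul_left, tsum_congr hhigh, ha.tsum_eq_zero_add]
    simp [a]
  linear_combination h1 + h2

lemma besselJ_eq_rpow_mul_powSeries (hν : 0 ≤ ν) {z : ℝ} (hz : 0 < z) :
    besselJ ν z = (z / 2) ^ ν * powSeries (besselCoeff ν) (z ^ 2) := by
  rw [besselJ, powSeries, ← tsum_mul_left]
  refine tsum_congr fun k => ?_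
  have hΓ : 0 < Gamma (k + ν + 1) := Gamma_pos_of_pos (by positivity)
  rw [show 2 * (k : ℝ) + ν = ((2 * k : ℕ) : ℝ) + ν by push_cast; ring,
    rpow_add (by positivity), rpow_natCast, pow_mul, div_pow,
    show (2 : ℝ) ^ 2 = 4 by norm_num, div_pow, besselCoeff]
  field_simp

end BesselSeries

section LiouvilleForm

variable {ν x : ℝ}

/-- `2^ν √x J_ν(x)` for `x > 0`: it solves `u'' + (1 - (ν² - 1/4)/x²) u = 0`. -/
def besselU (ν x : ℝ) : ℝ := x ^ (ν + 1/2) * powSeries (besselCoeff ν) (x ^ 2)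

def besselU' (ν x : ℝ) : ℝ :=
  x ^ (ν - 1/2) * ((ν + 1/2) * powSeries (besselCoeff ν) (x ^ 2)
    + 2 * x ^ 2 * powSeries (derivCoeff (besselCoeff ν)) (x ^ 2))

lemma besselU_eq_zero_iff (hν : 0 ≤ ν) (hx : 0 < x) : besselU ν x = 0 ↔ besselJ ν x = 0 := by
  rw [besselU, besselJ_eq_rpow_mul_powSeries hν hx]
  simp [(rpow_pos_of_pos hx _).ne', (rpow_pos_of_pos (half_pos hx) _).ne']

lemma rpow_sub_half (hx : 0 < x) : x ^ (ν - 1/2) = x ^ (ν + 1/2) / x := by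
  rw [← rpow_sub_one hx.ne']
  ring_nf

lemma hasDerivAt_rpow_const_of_pos (hx : 0 < x) (p : ℝ) :
    HasDerivAt (fun x => x ^ p) (p * (x ^ p / x)) x := by
  simpa [rpow_sub_one hx.ne'] using hasDerivAt_rpow_const (p := p) (Or.inl hx.ne')

lemma hasDerivAt_besselU (hν : 0 ≤ ν) (hx : 0 < x) :
    HasDerivAt (besselU ν) (besselU' ν x) x := by
  have hc := abs_besselCoeff_le hν
  refine ((hasDerivAt_rpow_const_of_pos hx _).mul (hasDerivAt_powSeries_sq hc x)).congr_deriv ?_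
  rw [besselU', rpow_sub_half hx]
  field_simp

lemma hasDerivAt_besselU' (hν : 0 ≤ ν) (hx : 0 < x) :
    HasDerivAt (besselU' ν) (-(1 - (ν ^ 2 - 1/4) / x ^ 2) * besselU ν x) x := by
  have hc := abs_besselCoeff_le hν
  have hsq : HasDerivAt (fun x : ℝ => x ^ 2) (2 * x) x := by simpa using hasDerivAt_pow 2 x
  have hK : HasDerivAt (fun x => (ν + 1/2) * powSeries (besselCoeff ν) (x ^ 2)
      + 2 * x ^ 2 * powSeries (derivCoeff (besselCoeff ν)) (x ^ 2))
      ((ν + 1/2) * (powSeries (derivCoeff (besselCoeff ν)) (x ^ 2) * (2 * x))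
        + (2 * (2 * x) * powSeries (derivCoeff (besselCoeff ν)) (x ^ 2)
          + 2 * x ^ 2 * (powSeries (derivCoeff (derivCoeff (besselCoeff ν))) (x ^ 2) * (2 * x))))
      x :=
    ((hasDerivAt_powSeries_sq hc x).const_mul _).add ((hsq.const_mul 2).mul
      (hasDerivAt_powSeries_sq (abs_derivCoeff_le hc) x))
  refine ((hasDerivAt_rpow_const_of_pos hx _).mul hK).congr_deriv ?_
  rw [besselU, rpow_sub_half hx]
  have hode := powSeries_besselCoeff_ode hν (x ^ 2)
  field_simp
  linear_combination 16 * x ^ 2 * hode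

end LiouvilleForm

section Sturm

lemma monotoneOn_Icc_of_hasDerivAt_nonneg {f f' : ℝ → ℝ} {a b : ℝ}
    (hf : ∀ x ∈ Icc a b, HasDerivAt f (f' x) x) (hf'₀ : ∀ x ∈ Ioo a b, 0 ≤ f' x) :
    MonotoneOn f (Icc a b) :=
  monotoneOn_of_hasDerivWithinAt_nonneg (convex_Icc a b)
    (fun x hx => (hf x hx).continuousAt.continuousWithinAt)
    (fun x hx => by
      rw [interior_Icc] at hx ⊢
      exact (hf x (Ioo_subset_Icc_self hx)).hasDerivWithinAt)
    (by rwa [interior_Icc])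

variable {f f' q : ℝ → ℝ} {a m : ℝ}

/-- If `f > 0`, the Wronskian of `f` and `sin (m (x - a))` (which solves `v'' + m² v = 0` and
vanishes at both ends) is nondecreasing, yet it goes from `m f(a) > 0` to `-m f(a + π/m) < 0`. -/
lemma exists_nonpos_of_sq_le (hm : 0 < m)
    (hf : ∀ x ∈ Icc a (a + π / m), HasDerivAt f (f' x) x)
    (hf' : ∀ x ∈ Icc a (a + π / m), HasDerivAt f' (-q x * f x) x)
    (hq : ∀ x ∈ Icc a (a + π / m), m ^ 2 ≤ q x) :
    ∃ x ∈ Icc a (a + π / m), f x ≤ 0 := by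
  by_contra! hpos
  set b := a + π / m
  have hmb : m * (b - a) = π := by simp only [b]; field_simp; ring
  have hab : a ≤ b := by simp only [b]; linarith [div_pos pi_pos hm]
  set W := fun x => m * f x * cos (m * (x - a)) - f' x * sin (m * (x - a))
  have hW : ∀ x ∈ Icc a b, HasDerivAt W ((q x - m ^ 2) * f x * sin (m * (x - a))) x := by
    intro x hx
    have hlin : HasDerivAt (fun x => m * (x - a)) m x := by
      simpa using ((hasDerivAt_id x).sub_const a).const_mul m
    refine ((((hf x hx).const_mul m).mul ((hasDerivAt_cos _).comp x hlin)).sub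
      ((hf' x hx).mul ((hasDerivAt_sin _).comp x hlin))).congr_deriv ?_
    simp only [Function.comp_apply]
    ring
  have hmono := monotoneOn_Icc_of_hasDerivAt_nonneg hW fun x hx => by
    have hsin : 0 ≤ sin (m * (x - a)) := sin_nonneg_of_nonneg_of_le_pi
      (mul_nonneg hm.le (by linarith [hx.1])) (hmb ▸ by gcongr; exact hx.2.le)
    have hx' := Ioo_subset_Icc_self hx
    exact mul_nonneg (mul_nonneg (sub_nonneg.2 (hq x hx')) (hpos x hx').le) hsin
  have hWab := hmono (left_mem_Icc.2 hab) (right_mem_Icc.2 hab) hab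
  simp only [W, sub_self, mul_zero, cos_zero, sin_zero, hmb, cos_pi, sin_pi] at hWab
  nlinarith [hpos a (left_mem_Icc.2 hab), hpos b (right_mem_Icc.2 hab)]

lemma exists_eq_zero_of_sq_le (hm : 0 < m)
    (hf : ∀ x ∈ Icc a (a + π / m), HasDerivAt f (f' x) x)
    (hf' : ∀ x ∈ Icc a (a + π / m), HasDerivAt f' (-q x * f x) x)
    (hq : ∀ x ∈ Icc a (a + π / m), m ^ 2 ≤ q x) :
    ∃ x ∈ Icc a (a + π / m), f x = 0 := by
  have ha : a ∈ Icc a (a + π / m) := left_mem_Icc.2 (by linarith [div_pos pi_pos hm])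
  -- normalise the sign: `f a * f` is nonnegative at `a`
  obtain ⟨x, hx, hfx⟩ := exists_nonpos_of_sq_le (f := fun x => f a * f x)
    (f' := fun x => f a * f' x) hm (fun x hx => (hf x hx).const_mul _)
    (fun x hx => ((hf' x hx).const_mul (f a)).congr_deriv (by ring)) hq
  have hcont : ContinuousOn (fun x => f a * f x) (Icc a (a + π / m)) := fun x hx =>
    ((hf x hx).continuousAt.const_mul _).continuousWithinAt
  obtain ⟨z, hz, hz0⟩ := isPreconnected_Icc.intermediate_value hx ha hcont
    ⟨hfx, mul_self_nonneg _⟩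
  rcases mul_eq_zero.1 hz0 with h | h
  exacts [⟨a, ha, h⟩, ⟨z, hz, h⟩]

end Sturm

section BesselZeros

variable {ν : ℝ}

lemma eventually_pos_besselU_mul_besselU' (hν : 0 ≤ ν) :
    ∀ᶠ x in 𝓝[>] 0, 0 < besselU ν x * besselU' ν x := by
  have hc := abs_besselCoeff_le hν
  set H := powSeries (besselCoeff ν)
  set K := fun y => (ν + 1/2) * H y + 2 * y * powSeries (derivCoeff (besselCoeff ν)) y
  have hH0 : 0 < H 0 := by
    have := Gamma_pos_of_pos (by positivity : 0 < ν + 1)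
    simp only [H, powSeries_zero, besselCoeff]
    simpa using this
  have hK0 : 0 < K 0 := by simp only [K, mul_zero, zero_mul, add_zero]; positivity
  have hK : Continuous K := (continuous_const.mul (continuous_powSeries hc)).add
    ((continuous_const.mul continuous_id).mul (continuous_powSeries (abs_derivCoeff_le hc)))
  have hsq : Tendsto (fun x : ℝ => x ^ 2) (𝓝[>] 0) (𝓝 0) := by
    simpa using ((continuous_pow 2).tendsto (0 : ℝ)).mono_left nhdsWithin_le_nhds
  filter_upwards [hsq.eventually ((continuous_powSeries hc).continuousAt.eventually
      (lt_mem_nhds hH0)), hsq.eventually (hK.continuousAt.eventually (lt_mem_nhds hK0)),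
      self_mem_nhdsWithin] with x hHx hKx (hx : 0 < x)
  exact mul_pos (mul_pos (rpow_pos_of_pos hx _) hHx) (mul_pos (rpow_pos_of_pos hx _) hKx)

/-- Where `x² < ν² - 1/4`, `(u u')' = u'² + ((ν² - 1/4)/x² - 1) u² ≥ 0`; but `u u'` is positive
near `0` and vanishes at a zero of `u`. -/
lemma sq_sub_le_sq_of_besselJ_eq_zero (hν : 0 ≤ ν) {z : ℝ} (hz : 0 < z)
    (hJ : besselJ ν z = 0) : ν ^ 2 - 1/4 ≤ z ^ 2 := by
  by_contra! hlt
  obtain ⟨x₀, hx₀, hx₀z⟩ :=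
    ((eventually_pos_besselU_mul_besselU' hν).and (Ioo_mem_nhdsGT hz)).exists
  have hmono := monotoneOn_Icc_of_hasDerivAt_nonneg (b := z)
    (f := fun x => besselU ν x * besselU' ν x)
    (fun x hx => (hasDerivAt_besselU hν (hx₀z.1.trans_le hx.1)).mul
      (hasDerivAt_besselU' hν (hx₀z.1.trans_le hx.1)))
    fun x hx => by
      have hx0 : 0 < x := hx₀z.1.trans hx.1
      have hr : 1 ≤ (ν ^ 2 - 1/4) / x ^ 2 := by
        rw [one_le_div (by positivity)]
        nlinarith [hx.2]
      nlinarith [mul_nonneg (sub_nonneg.2 hr) (sq_nonneg (besselU ν x)),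
        sq_nonneg (besselU' ν x)]
  have := hmono ⟨le_rfl, hx₀z.2.le⟩ ⟨hx₀z.2.le, le_rfl⟩ hx₀z.2.le
  simp only [(besselU_eq_zero_iff hν hz).2 hJ, zero_mul] at this
  linarith

lemma besselJZero_succ_le {k : ℕ} {w : ℝ} (hw : besselJZero ν k < w) (hJ : besselJ ν w = 0) :
    besselJZero ν (k + 1) ≤ w :=
  csInf_le ⟨besselJZero ν k, fun _ hz => hz.1.le⟩ ⟨hw, hJ⟩

lemma besselJZero_le_succ {k : ℕ} {w : ℝ} (hw : besselJZero ν k < w) (hJ : besselJ ν w = 0) :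
    besselJZero ν k ≤ besselJZero ν (k + 1) :=
  le_csInf ⟨w, hw, hJ⟩ fun _ hz => hz.1.le

lemma sq_sub_le_sq_besselJZero (hν : 0 ≤ ν) {k : ℕ} (hk : 0 < besselJZero ν k) :
    ν ^ 2 - 1/4 ≤ besselJZero ν k ^ 2 := by
  cases k with
  | zero => simp [besselJZero] at hk
  | succ n =>
    set S := {z | besselJZero ν n < z ∧ besselJ ν z = 0}
    have hS : besselJZero ν (n + 1) = sInf S := rfl
    have hne : S.Nonempty := by
      by_contra h
      simp [hS, not_nonempty_iff_eq_empty.1 h] at hk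
    have hbdd : BddBelow S := ⟨besselJZero ν n, fun _ hz => hz.1.le⟩
    have hsqrt : √(ν ^ 2 - 1/4) ≤ sInf S := le_csInf hne fun z hz => by
      have hz0 : 0 < z := hk.trans_le (hS ▸ csInf_le hbdd hz)
      exact (sqrt_le_left hz0.le).2 (sq_sub_le_sq_of_besselJ_eq_zero hν hz0 hz.2)
    exact hS ▸ (sqrt_le_left (hS ▸ hk.le)).1 hsqrt

lemma exists_besselJ_eq_zero_mem_Icc (hν : 0 ≤ ν) {j ε : ℝ} (hj : 0 < j)
    (hνj : ν ^ 2 - 1/4 ≤ j ^ 2) (hε : 0 < ε) :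
    ∃ w ∈ Icc ((1 + ε) * j) ((1 + ε) * j + π / √(1 - 1 / (1 + ε) ^ 2)), besselJ ν w = 0 := by
  have hε1 : 1 / (1 + ε) ^ 2 < 1 := by
    rw [div_lt_one (by positivity)]
    nlinarith
  set m := √(1 - 1 / (1 + ε) ^ 2)
  have hm : 0 < m := sqrt_pos.2 (by linarith)
  have hm2 : m ^ 2 = 1 - 1 / (1 + ε) ^ 2 := sq_sqrt (by linarith)
  have hpos : ∀ x ∈ Icc ((1 + ε) * j) ((1 + ε) * j + π / m), 0 < x := fun x hx =>
    (by positivity : 0 < (1 + ε) * j).trans_le hx.1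
  obtain ⟨w, hw, hw0⟩ := exists_eq_zero_of_sq_le (q := fun x => 1 - (ν ^ 2 - 1/4) / x ^ 2) hm
    (fun x hx => hasDerivAt_besselU hν (hpos x hx))
    (fun x hx => hasDerivAt_besselU' hν (hpos x hx)) fun x hx => by
      have hx0 := hpos x hx
      have : (ν ^ 2 - 1/4) / x ^ 2 ≤ 1 / (1 + ε) ^ 2 := by
        rw [div_le_div_iff₀ (by positivity) (by positivity)]
        calc (ν ^ 2 - 1/4) * (1 + ε) ^ 2 ≤ j ^ 2 * (1 + ε) ^ 2 := by gcongr
          _ = ((1 + ε) * j) ^ 2 := by ring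
          _ ≤ 1 * x ^ 2 := by rw [one_mul]; gcongr; exact hx.1
      rw [hm2]
      linarith
  exact ⟨w, hw, (besselU_eq_zero_iff hν (hpos w hw)).1 hw0⟩

lemma besselJZero_succ_mem_Icc (hν : 0 ≤ ν) {k : ℕ} (hk : 0 < besselJZero ν k) {ε : ℝ}
    (hε : 0 < ε) : besselJZero ν (k + 1) ∈ Icc (besselJZero ν k)
      ((1 + ε) * besselJZero ν k + π / √(1 - 1 / (1 + ε) ^ 2)) := by
  obtain ⟨w, hw, hJ⟩ := exists_besselJ_eq_zero_mem_Icc hν hk (sq_sub_le_sq_besselJZero hν hk) hε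
  have hkw : besselJZero ν k < w := by nlinarith [hw.1]
  exact ⟨besselJZero_le_succ hkw hJ, (besselJZero_succ_le hkw hJ).trans hw.2⟩

end BesselZeros

end

theorem besselZero_ratio_tendsto_one_general (ν : ℕ → ℝ) (k : ℕ → ℕ)
    (hν : ∀ i, 0 ≤ ν i)
    (htop : Tendsto (fun i => besselJZero (ν i) (k i)) atTop atTop) :
    Tendsto (fun i => besselJZero (ν i) (k i + 1) / besselJZero (ν i) (k i))
      atTop (nhds 1) := by
  have hpos := htop.eventually_gt_atTop 0
  refine tendsto_order.2 ⟨fun b hb => ?_, fun b hb => ?_⟩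
  · filter_upwards [hpos] with i hi
    exact hb.trans_le ((one_le_div hi).2 (besselJZero_succ_mem_Icc (hν i) hi one_pos).1)
  · set ε := (b - 1) / 2
    have hε : 0 < ε := by simp only [ε]; linarith
    set m := √(1 - 1 / (1 + ε) ^ 2)
    filter_upwards [hpos, htop.eventually_gt_atTop (π / m / ε)] with i hi hiT
    calc besselJZero (ν i) (k i + 1) / besselJZero (ν i) (k i)
        ≤ ((1 + ε) * besselJZero (ν i) (k i) + π / m) / besselJZero (ν i) (k i) := by
          gcongr
          exact (besselJZero_succ_mem_Icc (hν i) hi hε).2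
      _ = 1 + ε + π / m / besselJZero (ν i) (k i) := by field_simp
      _ < 1 + ε + ε := by
          gcongr
          rwa [div_lt_iff₀ hi, ← div_lt_iff₀' hε]
      _ = b := by simp only [ε]; ring

/-- If `(ν_i, k_i)` is a sequence with `ν_i ≥ 0`, `k_i ≥ 1` and
`j_{ν_i, k_i} → ∞`, then `j_{ν_i, k_i + 1} / j_{ν_i, k_i} → 1`. -/
theorem besselZero_ratio_tendsto_one (ν : ℕ → ℝ) (k : ℕ → ℕ)
    (hν : ∀ i, 0 ≤ ν i) (hk : ∀ i, 1 ≤ k i)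
    (htop : Tendsto (fun i => besselJZero (ν i) (k i)) atTop atTop) :
    Tendsto (fun i => besselJZero (ν i) (k i + 1) / besselJZero (ν i) (k i))
      atTop (nhds 1) :=
  besselZero_ratio_tendsto_one_general ν k hν htop
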